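/- Let (a,b), (a',b') ∈ ℤ_{≥0}² be distinct pairs with gcd(a,b) = gcd(a',b') = 1, 1/2 ≤ a/b ≤ 2 and 1/2 ≤ a'/b' ≤ 2, and let α be the angle between (a²,b²) and (a'²,b'²). Then there are absolute constants c, C > 0 such that 1 ≤ |ab' − a'b| ≤ C h_{a,b} h_{a',b'} sin α, and consequently sin α ≥ c/(h_{a,b} h_{a',b'}). -/

import Mathlib

/-!
By Lagrange's identity,
`sin α · ‖(a²,b²)‖ · ‖(a'²,b'²)‖ = |a²b'² − a'²b²| = |ab' − a'b| (ab' + a'b)`.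
The norms are at most `√2 h²`, and when `a/b, a'/b' ∈ [1/2, 2]` every entry is at least half the
height, so `ab' + a'b ≥ h h' / 2`; this gives `|ab' − a'b| ≤ 4 h h' sin α`. Finally `ab' ≠ a'b`
because distinct reduced fractions differ, so `|ab' − a'b| ≥ 1`.
-/

noncomputable def vSq (a b : ℕ) : EuclideanSpace ℝ (Fin 2) := WithLp.toLp 2 ![(a : ℝ) ^ 2, (b : ℝ) ^ 2]

noncomputable def ang (a b a' b' : ℕ) : ℝ :=
  InnerProductGeometry.angle (vSq a b) (vSq a' b')

theorem Nat.Coprime.eq_of_mul_eq_mul {a b a' b' : ℕ} (h : a.Coprime b) (h' : a'.Coprime b')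
    (hab : a * b' = a' * b) : a = a' ∧ b = b' :=
  ⟨Nat.dvd_antisymm (h.dvd_of_dvd_mul_right ⟨b', hab.symm⟩) (h'.dvd_of_dvd_mul_right ⟨b, hab⟩),
    Nat.dvd_antisymm (h.symm.dvd_of_dvd_mul_left ⟨a', by linarith⟩)
      (h'.symm.dvd_of_dvd_mul_left ⟨a, by linarith⟩)⟩

theorem one_le_abs_mul_sub_mul {a b a' b' : ℕ} (hne : (a, b) ≠ (a', b'))
    (h : a.Coprime b) (h' : a'.Coprime b') :
    1 ≤ |(a : ℝ) * b' - a' * b| := by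
  have hne : a * b' ≠ a' * b := fun hab => hne <| by
    obtain ⟨rfl, rfl⟩ := h.eq_of_mul_eq_mul h' hab; rfl
  have : (1 : ℤ) ≤ |(a : ℤ) * b' - a' * b| :=
    Int.one_le_abs (sub_ne_zero.mpr (by exact_mod_cast hne))
  exact_mod_cast this

theorem max_le_two_mul_min_of_half_le_div {a b : ℕ} (h₁ : (1 : ℝ) / 2 ≤ (a : ℝ) / b)
    (h₂ : (a : ℝ) / b ≤ 2) : max a b ≤ 2 * min a b := by
  have hb : (0 : ℝ) < b := Nat.cast_pos.mpr <| Nat.pos_of_ne_zero fun hb => by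
    rw [hb, Nat.cast_zero, div_zero] at h₁; norm_num at h₁
  have hba : (b : ℝ) ≤ 2 * a := by rw [le_div_iff₀ hb] at h₁; linarith
  have hab : (a : ℝ) ≤ 2 * b := (div_le_iff₀ hb).mp h₂
  have : b ≤ 2 * a ∧ a ≤ 2 * b := ⟨by exact_mod_cast hba, by exact_mod_cast hab⟩
  omega

theorem max_mul_max_le_two_mul_add {a b a' b' : ℕ} (h : max a b ≤ 2 * min a b)
    (h' : max a' b' ≤ 2 * min a' b') : max a b * max a' b' ≤ 2 * (a * b' + a' * b) := by
  have h₁ : max a b * max a' b' ≤ (2 * a) * (2 * b') :=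
    Nat.mul_le_mul (h.trans (by omega)) (h'.trans (by omega))
  have h₂ : max a b * max a' b' ≤ (2 * b) * (2 * a') :=
    Nat.mul_le_mul (h.trans (by omega)) (h'.trans (by omega))
  linarith

theorem inner_vSq (a b a' b' : ℕ) :
    inner ℝ (vSq a b) (vSq a' b') = (a : ℝ) ^ 2 * a' ^ 2 + (b : ℝ) ^ 2 * b' ^ 2 := by
  simp only [vSq, PiLp.inner_apply, RCLike.inner_apply, Real.ringHom_apply, Fin.sum_univ_two,
    Fin.isValue, Matrix.cons_val_zero, Matrix.cons_val_one, Matrix.cons_val_fin_one]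
  ring

theorem sin_ang_mul_norm_mul_norm (a b a' b' : ℕ) :
    Real.sin (ang a b a' b') * (‖vSq a b‖ * ‖vSq a' b'‖) =
      |(a : ℝ) * b' - a' * b| * (a * b' + a' * b) := by
  rw [ang, InnerProductGeometry.sin_angle_mul_norm_mul_norm, inner_vSq, inner_vSq, inner_vSq,
    ← abs_of_nonneg (by positivity : (0 : ℝ) ≤ a * b' + a' * b), ← abs_mul, ← Real.sqrt_sq_eq_abs]
  congr 1
  ring

theorem norm_vSq_le (a b : ℕ) : ‖vSq a b‖ ≤ √2 * ((max a b : ℕ) : ℝ) ^ 2 := by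
  rw [EuclideanSpace.norm_eq, Real.sqrt_le_left (by positivity), mul_pow, Real.sq_sqrt zero_le_two]
  simp only [vSq, Real.norm_eq_abs, sq_abs, Fin.sum_univ_two, Fin.isValue, Matrix.cons_val_zero,
    Matrix.cons_val_one, Matrix.cons_val_fin_one, Nat.cast_max]
  have ha := le_max_left (a : ℝ) b
  have hb := le_max_right (a : ℝ) b
  nlinarith [pow_le_pow_left₀ (Nat.cast_nonneg _) ha 4, pow_le_pow_left₀ (Nat.cast_nonneg _) hb 4]

theorem abs_mul_sub_mul_le {a b a' b' : ℕ} (h : max a b ≤ 2 * min a b)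
    (h' : max a' b' ≤ 2 * min a' b') :
    |(a : ℝ) * b' - a' * b| ≤
      4 * ((max a b : ℕ) : ℝ) * ((max a' b' : ℕ) : ℝ) * Real.sin (ang a b a' b') := by
  rcases Nat.eq_zero_or_pos (max a b * max a' b') with h0 | hpos
  · rcases Nat.mul_eq_zero.mp h0 with h0 | h0 <;>
      obtain ⟨rfl, rfl⟩ := Nat.max_eq_zero_iff.mp h0 <;> simp
  have hsum : ((max a b : ℕ) : ℝ) * (max a' b' : ℕ) ≤ 2 * (a * b' + a' * b) := by
    exact_mod_cast max_mul_max_le_two_mul_add h h'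
  replace hpos : (0 : ℝ) < (max a b : ℕ) * (max a' b' : ℕ) := by exact_mod_cast hpos
  set H : ℝ := ((max a b : ℕ) : ℝ)
  set H' : ℝ := ((max a' b' : ℕ) : ℝ)
  have hnorm : ‖vSq a b‖ * ‖vSq a' b'‖ ≤ 2 * H ^ 2 * H' ^ 2 :=
    calc ‖vSq a b‖ * ‖vSq a' b'‖ ≤ (√2 * H ^ 2) * (√2 * H' ^ 2) :=
          mul_le_mul (norm_vSq_le a b) (norm_vSq_le a' b') (norm_nonneg _) (by positivity)
      _ = 2 * H ^ 2 * H' ^ 2 := by rw [mul_mul_mul_comm, Real.mul_self_sqrt zero_le_two]; ring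
  refine le_of_mul_le_mul_right ?_ hpos
  calc |(a : ℝ) * b' - a' * b| * (H * H')
      ≤ |(a : ℝ) * b' - a' * b| * (2 * (a * b' + a' * b)) := by gcongr
    _ = 2 * (Real.sin (ang a b a' b') * (‖vSq a b‖ * ‖vSq a' b'‖)) := by
        rw [sin_ang_mul_norm_mul_norm]; ring
    _ ≤ 2 * (Real.sin (ang a b a' b') * (2 * H ^ 2 * H' ^ 2)) := by
        gcongr; exact InnerProductGeometry.sin_angle_nonneg _ _
    _ = 4 * H * H' * Real.sin (ang a b a' b') * (H * H') := by ring

/-- **Lower bound on the angle.** For distinct pairs `(a,b) ≠ (a',b')` in `ℤ_{≥0}²` with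
`gcd(a,b) = gcd(a',b') = 1`, `1/2 ≤ a/b ≤ 2` and `1/2 ≤ a'/b' ≤ 2`, there are absolute
constants `c, C > 0` with `1 ≤ |ab' − a'b| ≤ C h_{a,b} h_{a',b'} sin α`, and consequently
`sin α ≥ c/(h_{a,b} h_{a',b'})`. -/
theorem angle_lower_bound :
    ∃ c C : ℝ, 0 < c ∧ 0 < C ∧
      ∀ a b a' b' : ℕ, (a, b) ≠ (a', b') →
        Nat.gcd a b = 1 → Nat.gcd a' b' = 1 →
        (1 : ℝ) / 2 ≤ (a : ℝ) / (b : ℝ) → (a : ℝ) / (b : ℝ) ≤ 2 →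
        (1 : ℝ) / 2 ≤ (a' : ℝ) / (b' : ℝ) → (a' : ℝ) / (b' : ℝ) ≤ 2 →
        (1 ≤ |(a : ℝ) * (b' : ℝ) - (a' : ℝ) * (b : ℝ)| ∧
          |(a : ℝ) * (b' : ℝ) - (a' : ℝ) * (b : ℝ)| ≤
            C * ((max a b : ℕ) : ℝ) * ((max a' b' : ℕ) : ℝ) * Real.sin (ang a b a' b') ∧
          c / (((max a b : ℕ) : ℝ) * ((max a' b' : ℕ) : ℝ)) ≤ Real.sin (ang a b a' b')) := by
  refine ⟨1 / 4, 4, by norm_num, by norm_num, fun a b a' b' hne hg hg' h₁ h₂ h₃ h₄ => ?_⟩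
  have hD := one_le_abs_mul_sub_mul hne hg hg'
  have hsin := abs_mul_sub_mul_le (max_le_two_mul_min_of_half_le_div h₁ h₂)
    (max_le_two_mul_min_of_half_le_div h₃ h₄)
  refine ⟨hD, hsin, div_le_of_le_mul₀ (by positivity) (InnerProductGeometry.sin_angle_nonneg _ _) ?_⟩
  linarith
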